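/- Let k̂₁ : [0,1] × [0,1] → ℝ be defined by k̂₁(t,s) = (1/2)·s(1−t)(2t−ts−s) if s ≤ t and k̂₁(t,s) = (1/2)·(1−s)²t² if s ≥ t. Then for every continuous function y : [0,1] → ℝ, the function u(t) = ∫₀¹ k̂₁(t,s) y(s) ds is three times continuously differentiable on [0,1], satisfies u‴(t) = −y(t) for all t ∈ [0,1], and satisfies the boundary conditions u(0) = u′(0) = u(1) = 0. -/

import Mathlib

open Set intervalIntegral MeasureTheory

/-- The Green's function `k̂₁` for `-u''' = y`, `u(0) = u'(0) = u(1) = 0`. -/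
noncomputable def khat1 : ℝ → ℝ → ℝ := fun t s =>
  if s ≤ t then (1 / 2) * (s * (1 - t) * (2 * t - t * s - s))
  else (1 / 2) * ((1 - s) ^ 2 * t ^ 2)

noncomputable def Fi (Y : ℝ → ℝ) (t : ℝ) : ℝ := ∫ s in (0:ℝ)..t, Y s
noncomputable def Gi (Y : ℝ → ℝ) (t : ℝ) : ℝ := ∫ s in (0:ℝ)..t, s * Y s
noncomputable def Hi (Y : ℝ → ℝ) (t : ℝ) : ℝ := ∫ s in (0:ℝ)..t, s ^ 2 * Y s
noncomputable def Ci (Y : ℝ → ℝ) (t : ℝ) : ℝ := ∫ s in (0:ℝ)..t, (s ^ 2 / 2 - s) * Y s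

noncomputable def uexp (Y : ℝ → ℝ) (t : ℝ) : ℝ :=
  t * Gi Y t - Hi Y t / 2 + t ^ 2 * Ci Y 1 + t ^ 2 / 2 * (Fi Y 1 - Fi Y t)

noncomputable def u1e (Y : ℝ → ℝ) (t : ℝ) : ℝ :=
  Gi Y t + 2 * t * Ci Y 1 + t * (Fi Y 1 - Fi Y t)

noncomputable def u2e (Y : ℝ → ℝ) (t : ℝ) : ℝ :=
  2 * Ci Y 1 + Fi Y 1 - Fi Y t

lemma Ci_eq (Y : ℝ → ℝ) (hY : Continuous Y) (t : ℝ) :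
    Ci Y t = Hi Y t / 2 - Gi Y t := by
  have h1 : IntervalIntegrable (fun s : ℝ => (1/2) * (s ^ 2 * Y s)) volume 0 t :=
    (by fun_prop : Continuous fun s : ℝ => (1/2) * (s ^ 2 * Y s)).intervalIntegrable _ _
  have h2 : IntervalIntegrable (fun s : ℝ => s * Y s) volume 0 t :=
    (by fun_prop : Continuous fun s : ℝ => s * Y s).intervalIntegrable _ _
  have : Ci Y t = ∫ s in (0:ℝ)..t, ((1/2) * (s ^ 2 * Y s) - s * Y s) := by
    apply integral_congr; intro s _; ring
  rw [this, integral_sub h1 h2, intervalIntegral.integral_const_mul]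
  simp only [Hi, Gi]; ring

lemma integral_khat_eq (Y : ℝ → ℝ) (hY : Continuous Y) {t : ℝ} (ht : t ∈ Icc (0:ℝ) 1) :
    (∫ s in (0:ℝ)..1, khat1 t s * Y s) = uexp Y t := by
  have hEq1 : EqOn (fun s => khat1 t s * Y s)
      (fun s => ((1/2) * (s * (1 - t) * (2 * t - t * s - s))) * Y s) (uIcc 0 t) := by
    rw [uIcc_of_le ht.1]
    intro s hs
    simp only [khat1, if_pos hs.2]
  have hEq2 : EqOn (fun s => khat1 t s * Y s)
      (fun s => ((1/2) * ((1 - s) ^ 2 * t ^ 2)) * Y s) (uIcc t 1) := by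
    rw [uIcc_of_le ht.2]
    intro s hs
    simp only [khat1]
    split_ifs with h
    · have hst : s = t := le_antisymm h hs.1
      subst hst; ring_nf
    · rfl
  have hc1 : Continuous fun s : ℝ => ((1/2) * (s * (1 - t) * (2 * t - t * s - s))) * Y s := by
    fun_prop
  have hc2 : Continuous fun s : ℝ => ((1/2) * ((1 - s) ^ 2 * t ^ 2)) * Y s := by fun_prop
  have hi1 : IntervalIntegrable (fun s => khat1 t s * Y s) volume 0 t :=
    (hc1.continuousOn.congr hEq1).intervalIntegrable
  have hi2 : IntervalIntegrable (fun s => khat1 t s * Y s) volume t 1 :=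
    (hc2.continuousOn.congr hEq2).intervalIntegrable
  have hsplit := integral_add_adjacent_intervals hi1 hi2
  rw [← hsplit, integral_congr hEq1, integral_congr hEq2]
  -- first piece
  have ia : IntervalIntegrable (fun s : ℝ => t * (s * Y s)) volume 0 t :=
    (by fun_prop : Continuous fun s : ℝ => t * (s * Y s)).intervalIntegrable _ _
  have ib : IntervalIntegrable (fun s : ℝ => (1/2) * (s ^ 2 * Y s)) volume 0 t :=
    (by fun_prop : Continuous fun s : ℝ => (1/2) * (s ^ 2 * Y s)).intervalIntegrable _ _
  have ic : IntervalIntegrable (fun s : ℝ => t ^ 2 * ((s ^ 2 / 2 - s) * Y s)) volume 0 t :=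
    (by fun_prop : Continuous fun s : ℝ => t ^ 2 * ((s ^ 2 / 2 - s) * Y s)).intervalIntegrable _ _
  have e1 : (∫ s in (0:ℝ)..t, ((1/2) * (s * (1 - t) * (2 * t - t * s - s))) * Y s)
      = t * Gi Y t - Hi Y t / 2 + t ^ 2 * Ci Y t := by
    have hptw : (∫ s in (0:ℝ)..t, ((1/2) * (s * (1 - t) * (2 * t - t * s - s))) * Y s)
        = ∫ s in (0:ℝ)..t,
          (t * (s * Y s) - (1/2) * (s ^ 2 * Y s) + t ^ 2 * ((s ^ 2 / 2 - s) * Y s)) := by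
      apply integral_congr; intro s _; ring
    rw [hptw, integral_add (ia.sub ib) ic, integral_sub ia ib, intervalIntegral.integral_const_mul,
      intervalIntegral.integral_const_mul, intervalIntegral.integral_const_mul]
    simp only [Gi, Hi, Ci]; ring
  -- second piece
  have ja : IntervalIntegrable (fun s : ℝ => t ^ 2 * ((s ^ 2 / 2 - s) * Y s)) volume t 1 :=
    (by fun_prop : Continuous fun s : ℝ => t ^ 2 * ((s ^ 2 / 2 - s) * Y s)).intervalIntegrable _ _
  have jb : IntervalIntegrable (fun s : ℝ => t ^ 2 / 2 * Y s) volume t 1 :=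
    (by fun_prop : Continuous fun s : ℝ => t ^ 2 / 2 * Y s).intervalIntegrable _ _
  have hC : (∫ s in t..(1:ℝ), (s ^ 2 / 2 - s) * Y s) = Ci Y 1 - Ci Y t := by
    have h := integral_add_adjacent_intervals
      (((by fun_prop : Continuous fun s : ℝ => (s ^ 2 / 2 - s) * Y s).intervalIntegrable 0 t :
        IntervalIntegrable (fun s : ℝ => (s ^ 2 / 2 - s) * Y s) volume 0 t))
      (((by fun_prop : Continuous fun s : ℝ => (s ^ 2 / 2 - s) * Y s).intervalIntegrable t 1 :
        IntervalIntegrable (fun s : ℝ => (s ^ 2 / 2 - s) * Y s) volume t 1))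
    simp only [Ci]; linarith
  have hF : (∫ s in t..(1:ℝ), Y s) = Fi Y 1 - Fi Y t := by
    have h := integral_add_adjacent_intervals ((hY.intervalIntegrable 0 t : IntervalIntegrable Y volume 0 t))
      ((hY.intervalIntegrable t 1 : IntervalIntegrable Y volume t 1))
    simp only [Fi]; linarith
  have e2 : (∫ s in t..(1:ℝ), ((1/2) * ((1 - s) ^ 2 * t ^ 2)) * Y s)
      = t ^ 2 * (Ci Y 1 - Ci Y t) + t ^ 2 / 2 * (Fi Y 1 - Fi Y t) := by
    have hptw : (∫ s in t..(1:ℝ), ((1/2) * ((1 - s) ^ 2 * t ^ 2)) * Y s)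
        = ∫ s in t..(1:ℝ), (t ^ 2 * ((s ^ 2 / 2 - s) * Y s) + t ^ 2 / 2 * Y s) := by
      apply integral_congr; intro s _; ring
    rw [hptw, integral_add ja jb, intervalIntegral.integral_const_mul, intervalIntegral.integral_const_mul, hC, hF]
  rw [e1, e2, uexp]; ring

lemma hasDerivAt_uexp (Y : ℝ → ℝ) (hY : Continuous Y) (t : ℝ) :
    HasDerivAt (uexp Y) (u1e Y t) t := by
  have hF : HasDerivAt (Fi Y) (Y t) t := (hY.integral_hasStrictDerivAt 0 t).hasDerivAt
  have hG : HasDerivAt (Gi Y) (t * Y t) t :=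
    ((by fun_prop : Continuous fun s : ℝ => s * Y s).integral_hasStrictDerivAt 0 t).hasDerivAt
  have hH : HasDerivAt (Hi Y) (t ^ 2 * Y t) t :=
    ((by fun_prop : Continuous fun s : ℝ => s ^ 2 * Y s).integral_hasStrictDerivAt 0 t).hasDerivAt
  have h1 := (hasDerivAt_id t).mul hG
  have h2 := hH.div_const 2
  have h3 := (hasDerivAt_pow 2 t).mul_const (Ci Y 1)
  have h4 := ((hasDerivAt_pow 2 t).div_const 2).mul ((hasDerivAt_const t (Fi Y 1)).sub hF)
  have h := ((h1.sub h2).add h3).add h4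
  refine h.congr_deriv ?_
  norm_num [u1e]
  ring

lemma hasDerivAt_u1e (Y : ℝ → ℝ) (hY : Continuous Y) (t : ℝ) :
    HasDerivAt (u1e Y) (u2e Y t) t := by
  have hF : HasDerivAt (Fi Y) (Y t) t := (hY.integral_hasStrictDerivAt 0 t).hasDerivAt
  have hG : HasDerivAt (Gi Y) (t * Y t) t :=
    ((by fun_prop : Continuous fun s : ℝ => s * Y s).integral_hasStrictDerivAt 0 t).hasDerivAt
  have h2 := ((hasDerivAt_id t).const_mul 2).mul_const (Ci Y 1)
  have h3 := (hasDerivAt_id t).mul ((hasDerivAt_const t (Fi Y 1)).sub hF)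
  have h := (hG.add h2).add h3
  refine h.congr_deriv ?_
  simp only [u2e, id_eq, id, Pi.sub_apply]
  ring

lemma hasDerivAt_u2e (Y : ℝ → ℝ) (hY : Continuous Y) (t : ℝ) :
    HasDerivAt (u2e Y) (-(Y t)) t := by
  have hF : HasDerivAt (Fi Y) (Y t) t := (hY.integral_hasStrictDerivAt 0 t).hasDerivAt
  have h : HasDerivAt (fun x => 2 * Ci Y 1 + Fi Y 1 - Fi Y x) (0 - Y t) t :=
    (hasDerivAt_const t (2 * Ci Y 1 + Fi Y 1)).sub hF
  rw [zero_sub] at h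
  exact h

lemma contDiff_uexp (Y : ℝ → ℝ) (hY : Continuous Y) : ContDiff ℝ 3 (uexp Y) := by
  have d1 : deriv (uexp Y) = u1e Y := funext fun t => (hasDerivAt_uexp Y hY t).deriv
  have d2 : deriv (u1e Y) = u2e Y := funext fun t => (hasDerivAt_u1e Y hY t).deriv
  have d3 : deriv (u2e Y) = fun t => -(Y t) :=
    funext fun t => (hasDerivAt_u2e Y hY t).deriv
  rw [show (3 : WithTop ℕ∞) = 2 + 1 from rfl, contDiff_succ_iff_deriv]
  refine ⟨fun t => (hasDerivAt_uexp Y hY t).differentiableAt, by simp, ?_⟩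
  rw [d1, show (2 : WithTop ℕ∞) = 1 + 1 from rfl, contDiff_succ_iff_deriv]
  refine ⟨fun t => (hasDerivAt_u1e Y hY t).differentiableAt, by simp, ?_⟩
  rw [d2, show (1 : WithTop ℕ∞) = 0 + 1 from rfl, contDiff_succ_iff_deriv]
  refine ⟨fun t => (hasDerivAt_u2e Y hY t).differentiableAt, by simp, ?_⟩
  rw [d3, contDiff_zero]
  exact hY.neg

/-- For every continuous `y : [0,1] → ℝ`, the function
`u(t) = ∫₀¹ k̂₁(t,s) y(s) ds` is three times continuously differentiable on
`[0,1]`, satisfies `u'''(t) = -y(t)` on `[0,1]` (derivatives taken within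
`[0,1]`), and satisfies `u(0) = u'(0) = u(1) = 0`. -/
theorem stmt_3 (y : ℝ → ℝ) (hy : ContinuousOn y (Icc 0 1)) :
    ContDiffOn ℝ 3 (fun t => ∫ s in (0:ℝ)..1, khat1 t s * y s) (Icc 0 1) ∧
    (∀ t ∈ Icc (0:ℝ) 1,
      derivWithin (derivWithin (derivWithin
        (fun t => ∫ s in (0:ℝ)..1, khat1 t s * y s) (Icc 0 1)) (Icc 0 1)) (Icc 0 1) t
        = - y t) ∧
    (∫ s in (0:ℝ)..1, khat1 0 s * y s) = 0 ∧
    derivWithin (fun t => ∫ s in (0:ℝ)..1, khat1 t s * y s) (Icc 0 1) 0 = 0 ∧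
    (∫ s in (0:ℝ)..1, khat1 1 s * y s) = 0 := by
  obtain ⟨Ym, hYm⟩ := ContinuousMap.exists_restrict_eq (X := ℝ) (Y := ℝ)
    (isClosed_Icc (a := (0:ℝ)) (b := 1)) ⟨_, hy.restrict⟩
  set Y : ℝ → ℝ := fun s => Ym s with hYdef
  have hYc : Continuous Y := Ym.continuous
  have hyY : ∀ s ∈ Icc (0:ℝ) 1, Y s = y s := by
    intro s hs
    have := DFunLike.congr_fun hYm ⟨s, hs⟩
    simpa using this
  set u : ℝ → ℝ := fun t => ∫ s in (0:ℝ)..1, khat1 t s * y s with hudef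
  have huY : ∀ t : ℝ, u t = ∫ s in (0:ℝ)..1, khat1 t s * Y s := by
    intro t
    apply integral_congr
    rw [uIcc_of_le (zero_le_one)]
    intro s hs
    simp only [hyY s hs]
  have hEqOnU : EqOn u (uexp Y) (Icc 0 1) := by
    intro t ht
    rw [huY t, integral_khat_eq Y hYc ht]
  have hUD : UniqueDiffOn ℝ (Icc (0:ℝ) 1) := uniqueDiffOn_Icc one_pos
  have hD1 : ∀ t ∈ Icc (0:ℝ) 1, derivWithin u (Icc 0 1) t = u1e Y t := by
    intro t ht
    rw [derivWithin_congr hEqOnU (hEqOnU ht)]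
    exact ((hasDerivAt_uexp Y hYc t).hasDerivWithinAt).derivWithin (hUD t ht)
  have hD2 : ∀ t ∈ Icc (0:ℝ) 1,
      derivWithin (derivWithin u (Icc 0 1)) (Icc 0 1) t = u2e Y t := by
    intro t ht
    rw [derivWithin_congr hD1 (hD1 t ht)]
    exact ((hasDerivAt_u1e Y hYc t).hasDerivWithinAt).derivWithin (hUD t ht)
  have hD3 : ∀ t ∈ Icc (0:ℝ) 1,
      derivWithin (derivWithin (derivWithin u (Icc 0 1)) (Icc 0 1)) (Icc 0 1) t = -(Y t) := by
    intro t ht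
    rw [derivWithin_congr hD2 (hD2 t ht)]
    exact ((hasDerivAt_u2e Y hYc t).hasDerivWithinAt).derivWithin (hUD t ht)
  refine ⟨?_, ?_, ?_, ?_, ?_⟩
  · exact ((contDiff_uexp Y hYc).contDiffOn).congr hEqOnU
  · intro t ht
    rw [hD3 t ht, hyY t ht]
  · have h0 : (0:ℝ) ∈ Icc (0:ℝ) 1 := ⟨le_refl _, zero_le_one⟩
    have := hEqOnU h0
    simp only [hudef] at this ⊢
    rw [this]
    simp [uexp, Gi, Hi, integral_same]
  · have h0 : (0:ℝ) ∈ Icc (0:ℝ) 1 := ⟨le_refl _, zero_le_one⟩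
    have := hD1 0 h0
    simp only [hudef] at this ⊢
    rw [this]
    simp [u1e, Gi, integral_same]
  · have h1 : (1:ℝ) ∈ Icc (0:ℝ) 1 := ⟨zero_le_one, le_refl _⟩
    have := hEqOnU h1
    simp only [hudef] at this ⊢
    rw [this, uexp, Ci_eq Y hYc]
    ring
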